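/- Let G be a weakly 5-edge-connected graph with at least 6 vertices and no K_{3,3} immersion, minimal in edge count among such non-3-regular-planar graphs on the same vertex count. Then no edge of G has multiplicity greater than three. -/

import Mathlib

/-- A finite multigraph without loops: vertices `V`, edges `E`,
each edge has an unordered pair of distinct endpoints. -/
structure Multigraph where
  V : Type
  E : Type
  [fV : Fintype V]
  [fE : Fintype E]
  [dV : DecidableEq V]
  [dE : DecidableEq E]
  ends : E → Sym2 V
  noLoop : ∀ e, ¬ (ends e).IsDiag

attribute [instance] Multigraph.fV Multigraph.fE Multigraph.dV Multigraph.dE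

namespace Multigraph

/-- Walks in a multigraph. -/
inductive Walk (G : Multigraph) : G.V → G.V → Type
  | nil (v : G.V) : Walk G v v
  | cons {u v w : G.V} (e : G.E) (h : G.ends e = s(u, v)) (p : Walk G v w) : Walk G u w

/-- The list of edges traversed by a walk. -/
def Walk.edges {G : Multigraph} : {u v : G.V} → G.Walk u v → List G.E
  | _, _, .nil _ => []
  | _, _, .cons e _ p => e :: p.edges

/-- The list of vertices visited by a walk. -/
def Walk.support {G : Multigraph} : {u v : G.V} → G.Walk u v → List G.V
  | u, _, .nil _ => [u]
  | u, _, .cons _ _ p => u :: p.support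

/-- A walk is a path if it visits no vertex twice. -/
def Walk.IsPath {G : Multigraph} {u v : G.V} (p : G.Walk u v) : Prop := p.support.Nodup

/-- Data of an immersion of `H` into `G`: an injective map on vertices and,
for each edge of `H`, a path in `G` joining the images of its endpoints,
the paths being pairwise edge-disjoint. -/
structure ImmersionData (H G : Multigraph) where
  vmap : H.V → G.V
  inj : Function.Injective vmap
  pstart : H.E → G.V
  pend : H.E → G.V
  walk : ∀ e, G.Walk (pstart e) (pend e)
  ends_eq : ∀ e, s(pstart e, pend e) = (H.ends e).map vmap
  isPath : ∀ e, (walk e).IsPath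
  edgeDisj : ∀ e e', e ≠ e' → List.Disjoint (walk e).edges (walk e').edges

/-- `H` immerses in `G`. -/
def Immerses (H G : Multigraph) : Prop := Nonempty (ImmersionData H G)

/-- Data witnessing that `G` contains a subdivision of `H` as a subgraph
(i.e. `H` is a topological minor of `G`): as an immersion, but moreover the
paths may only meet at images of common endpoints. -/
structure SubdivisionData (H G : Multigraph) extends ImmersionData H G where
  vtxDisj : ∀ e e', e ≠ e' → ∀ x, x ∈ (walk e).support → x ∈ (walk e').support →
    ∃ w, x = vmap w ∧ w ∈ H.ends e ∧ w ∈ H.ends e'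

/-- `G` contains a subdivision of `H` as a subgraph. -/
def ContainsSubdivision (H G : Multigraph) : Prop := Nonempty (SubdivisionData H G)

/-- The complete bipartite graph `K_{3,3}`. -/
def K33 : Multigraph where
  V := Fin 3 ⊕ Fin 3
  E := Fin 3 × Fin 3
  ends e := s(Sum.inl e.1, Sum.inr e.2)
  noLoop e := by simp [Sym2.mk_isDiag_iff]

/-- The complete graph `K_5`. -/
def K5 : Multigraph where
  V := Fin 5
  E := {p : Fin 5 × Fin 5 // p.1 < p.2}
  ends e := s(e.1.1, e.1.2)
  noLoop e := by simpa [Sym2.mk_isDiag_iff] using e.2.ne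

variable (G : Multigraph)

/-- The degree of a vertex: the number of incident edges. -/
def deg (v : G.V) : ℕ := (Finset.univ.filter fun e => v ∈ G.ends e).card

/-- The multiplicity of the (possible) edge between `u` and `v`. -/
def mult (u v : G.V) : ℕ := (Finset.univ.filter fun e => G.ends e = s(u, v)).card

/-- The edge cut determined by a set `A` of vertices. -/
def cut (A : Finset G.V) : Finset G.E :=
  Finset.univ.filter fun e => ∃ u ∈ A, ∃ v ∈ Aᶜ, G.ends e = s(u, v)

/-- Every edge cut of `G` has at least `k` edges. -/
def EdgeConnGe (k : ℕ) : Prop :=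
  ∀ A : Finset G.V, A.Nonempty → A ≠ Finset.univ → k ≤ (G.cut A).card

/-- Internally 4-edge-connected: 3-edge-connected and every 3-edge cut has a
side consisting of a single vertex. -/
def Internally4EC : Prop :=
  G.EdgeConnGe 3 ∧ ∀ A : Finset G.V, A.Nonempty → A ≠ Finset.univ →
    (G.cut A).card = 3 → A.card = 1 ∨ Aᶜ.card = 1

/-- Weakly 5-edge-connected: internally 4-edge-connected and every 4-edge cut
has a side with at most two vertices. -/
def Weakly5EC : Prop :=
  G.Internally4EC ∧ ∀ A : Finset G.V, A.Nonempty → A ≠ Finset.univ →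
    (G.cut A).card = 4 → A.card ≤ 2 ∨ Aᶜ.card ≤ 2

/-- `G` is `d`-regular. -/
def IsRegular (d : ℕ) : Prop := ∀ v, G.deg v = d

/-- `G` is connected. -/
def Connected : Prop := ∀ u v : G.V, Nonempty (G.Walk u v)

/-- `v` is a cut-vertex: the remaining vertices split into two nonempty parts
with no edge between them. -/
def IsCutVertex (v : G.V) : Prop :=
  ∃ C D : Finset G.V, C.Nonempty ∧ D.Nonempty ∧ Disjoint C D ∧ v ∉ C ∧ v ∉ D ∧
    (∀ x : G.V, x ∈ C ∪ D ∨ x = v) ∧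
    ∀ e : G.E, ¬ ∃ u ∈ C, ∃ w ∈ D, G.ends e = s(u, w)

/-- `G` is 2-connected. -/
def TwoConnected : Prop :=
  G.Connected ∧ 3 ≤ Fintype.card G.V ∧ ∀ v, ¬ G.IsCutVertex v

/-- Planarity, via Kuratowski's characterization: no subdivision of `K_5`
nor of `K_{3,3}` as a subgraph. -/
def Planar : Prop := ¬ ContainsSubdivision K5 G ∧ ¬ ContainsSubdivision K33 G

end Multigraph

/-!
Suppose `u` and `v` are joined by at least four edges, and let `e₀` be one of them. Call a cut
tight if it has the least size weak 5-edge-connectivity allows for its sides. If no cut through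
`e₀` is tight, deleting `e₀` keeps the graph weakly 5-edge-connected. Otherwise take a tight cut
`δ(A)` with `u ∈ A`, `v ∉ A`: it has at most five edges, at least four of them `uv`-edges, so at
most one stray edge `f`. Split off `e₀` together with an edge `xu`, `x ∈ A - u`, i.e. replace
them by an edge `xv`. Only cuts separating `u` from `x` and `v` shrink, by two; such a cut holds
the `uv`-edges and `δ((A - u) \ A')` apart from `f`, so it keeps at least five edges unless `x`
has degree three and is an end of `f`, and a neighbour `x` avoiding this exists since `δ(A)` is
tight. Either way the result has fewer edges, no new immersions (its paths lift to `G`), and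
still three parallel `uv`-edges, so it is not 3-regular: this contradicts minimality.
-/

open Finset

lemma Finset.card_erase_add_ite {α : Type*} [DecidableEq α] (s : Finset α) (a : α) :
    #(s.erase a) + (if a ∈ s then 1 else 0) = #s := by
  split_ifs with ha
  · exact card_erase_add_one ha
  · rw [erase_eq_of_notMem ha, add_zero]

lemma Finset.card_add_ite_eq_of_erase_eq {α : Type*} [DecidableEq α] {s t : Finset α} {a : α}
    (h : s.erase a = t.erase a) :
    #s + (if a ∈ t then 1 else 0) = #t + (if a ∈ s then 1 else 0) := by
  have hs := card_erase_add_ite s a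
  have ht := card_erase_add_ite t a
  rw [h] at hs
  omega

namespace Multigraph

variable {G : Multigraph}

lemma mem_cut_iff {A : Finset G.V} {e : G.E} {a b : G.V} (h : G.ends e = s(a, b)) :
    e ∈ G.cut A ↔ (a ∈ A ↔ b ∉ A) := by
  simp only [cut, mem_filter, mem_univ, true_and, mem_compl, h, Sym2.eq_iff]
  constructor
  · rintro ⟨c, hc, d, hd, ⟨rfl, rfl⟩ | ⟨rfl, rfl⟩⟩ <;> tauto
  · intro hab
    by_cases ha : a ∈ A
    · exact ⟨a, ha, b, hab.1 ha, Or.inl ⟨rfl, rfl⟩⟩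
    · exact ⟨b, not_not.1 (mt hab.2 ha), a, ha, Or.inr ⟨rfl, rfl⟩⟩

lemma exists_of_mem_cut {A : Finset G.V} {e : G.E} (he : e ∈ G.cut A) :
    ∃ a ∈ A, ∃ b ∉ A, G.ends e = s(a, b) := by
  simpa [cut] using he

lemma exists_ends_eq (e : G.E) : ∃ a b : G.V, G.ends e = s(a, b) := by
  induction G.ends e using Sym2.ind with
  | _ a b => exact ⟨a, b, rfl⟩

lemma cut_compl (A : Finset G.V) : G.cut Aᶜ = G.cut A := by
  ext e
  obtain ⟨a, b, h⟩ := exists_ends_eq e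
  rw [mem_cut_iff h, mem_cut_iff h, mem_compl, mem_compl]
  tauto

lemma mem_cut_singleton {x : G.V} {e : G.E} : e ∈ G.cut {x} ↔ x ∈ G.ends e := by
  obtain ⟨a, b, h⟩ := exists_ends_eq e
  have hab : a ≠ b := fun hab => G.noLoop e (by simp [h, hab])
  rw [mem_cut_iff h, h, Sym2.mem_iff, mem_singleton, mem_singleton]
  constructor
  · intro h'
    by_cases hxa : a = x
    · exact Or.inl hxa.symm
    · exact Or.inr (not_not.1 (mt h'.2 hxa)).symm
  · rintro (rfl | rfl) <;> simp [hab, Ne.symm hab]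

lemma eq_of_mem_ends_of_mem_cut {A : Finset G.V} {e : G.E} (he : e ∈ G.cut A) {x y : G.V}
    (hx : x ∈ A) (hy : y ∈ A) (hxe : x ∈ G.ends e) (hye : y ∈ G.ends e) : x = y := by
  obtain ⟨a, b, h⟩ := exists_ends_eq e
  rw [mem_cut_iff h] at he
  rw [h, Sym2.mem_iff] at hxe hye
  rcases hxe with rfl | rfl <;> rcases hye with rfl | rfl <;> tauto

lemma mult_comm (u v : G.V) : G.mult u v = G.mult v u := by
  simp only [mult, Sym2.eq_swap]

lemma mult_self (u : G.V) : G.mult u u = 0 := by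
  rw [mult, card_eq_zero, filter_eq_empty_iff]
  exact fun e _ h => G.noLoop e (by simp [h])

lemma EdgeConnGe.mono {j k : ℕ} (h : G.EdgeConnGe k) (hjk : j ≤ k) : G.EdgeConnGe j :=
  fun A hA hAu => hjk.trans (h A hA hAu)

lemma EdgeConnGe.eq_empty_of_cut_eq_empty {k : ℕ} (h : G.EdgeConnGe k) (hk : 0 < k)
    {A : Finset G.V} {z : G.V} (hz : z ∉ A) (hA : G.cut A = ∅) : A = ∅ := by
  by_contra hne
  have := h A (nonempty_iff_ne_empty.2 hne) (fun hu => hz (hu ▸ mem_univ z))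
  simp [hA] at this
  omega

lemma Internally4EC.eq_singleton (h4 : G.Internally4EC) {D : Finset G.V} {x u v : G.V}
    (hx : x ∈ D) (hu : u ∉ D) (hv : v ∉ D) (huv : u ≠ v) (hD : #(G.cut D) = 3) : D = {x} := by
  have hpair : #({u, v} : Finset G.V) ≤ #Dᶜ := card_le_card fun w hw => by
    rcases mem_insert.1 hw with rfl | hw
    · exact mem_compl.2 hu
    · exact mem_singleton.1 hw ▸ mem_compl.2 hv
  rw [card_pair huv] at hpair
  rcases h4.2 D ⟨x, hx⟩ (fun h => hu (h ▸ mem_univ u)) hD with hD1 | hD1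
  · exact eq_singleton_iff_unique_mem.2 ⟨hx, fun y hy => card_le_one.1 hD1.le y hy x hx⟩
  · omega

lemma card_cut_erase_add_card_cut_le {S : Finset G.V} {x : G.V} (hx : x ∈ S)
    (h : ∀ e ∈ G.cut S, x ∈ G.ends e) : #(G.cut (S.erase x)) + #(G.cut S) ≤ #(G.cut {x}) := by
  rw [← card_union_of_disjoint]
  · refine card_le_card (union_subset (fun e he => mem_cut_singleton.2 ?_)
      fun e he => mem_cut_singleton.2 (h e he))
    by_cases hS : e ∈ G.cut S
    · exact h e hS
    obtain ⟨a, b, hab⟩ := exists_ends_eq e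
    rw [mem_cut_iff hab, mem_erase, mem_erase] at he
    rw [mem_cut_iff hab] at hS
    rw [hab, Sym2.mem_iff, eq_comm, @eq_comm _ x b]
    tauto
  · refine disjoint_left.2 fun e he he' => ?_
    obtain ⟨a, b, hab⟩ := exists_ends_eq e
    have hxe := h e he'
    rw [mem_cut_iff hab, mem_erase, mem_erase] at he
    rw [mem_cut_iff hab] at he'
    rw [hab, Sym2.mem_iff] at hxe
    rcases hxe with rfl | rfl <;> simp_all

def edgesBetween (G : Multigraph) (u v : G.V) : Finset G.E :=
  univ.filter fun e => G.ends e = s(u, v)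

lemma mem_edgesBetween {u v : G.V} {e : G.E} : e ∈ G.edgesBetween u v ↔ G.ends e = s(u, v) := by
  simp [edgesBetween]

lemma card_edgesBetween (u v : G.V) : #(G.edgesBetween u v) = G.mult u v := rfl

lemma card_cut_singleton (x : G.V) : #(G.cut {x}) = G.deg x := by
  simp only [deg, ← mem_cut_singleton, filter_mem_eq_inter, univ_inter]

def cutThreshold {V : Type} [Fintype V] [DecidableEq V] (A : Finset V) : ℕ :=
  if #A ≤ 1 ∨ #Aᶜ ≤ 1 then 3 else if #A ≤ 2 ∨ #Aᶜ ≤ 2 then 4 else 5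

section cutThreshold

variable {V : Type} [Fintype V] [DecidableEq V] (A : Finset V)

lemma cutThreshold_compl : cutThreshold Aᶜ = cutThreshold A := by
  simp only [cutThreshold, compl_compl, or_comm]

lemma cutThreshold_le_five : cutThreshold A ≤ 5 := by
  unfold cutThreshold; split_ifs <;> omega

lemma cutThreshold_le_three {A : Finset V} (hA : #A ≤ 1) : cutThreshold A ≤ 3 := by
  unfold cutThreshold; split_ifs <;> omega

lemma cutThreshold_le_four {A : Finset V} (hA : #A ≤ 2) : cutThreshold A ≤ 4 := by
  unfold cutThreshold; split_ifs <;> omega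

end cutThreshold

lemma weakly5EC_iff : G.Weakly5EC ↔
    ∀ A : Finset G.V, A.Nonempty → A ≠ univ → cutThreshold A ≤ #(G.cut A) := by
  have sides : ∀ A : Finset G.V, A.Nonempty → A ≠ univ → 1 ≤ #A ∧ 1 ≤ #Aᶜ := fun A hA hAu =>
    ⟨card_pos.2 hA, card_pos.2 ((compl_ne_univ_iff_nonempty Aᶜ).1 (by rwa [compl_compl]))⟩
  constructor
  · rintro ⟨⟨h3, h3'⟩, h4⟩ A hA hAu
    have := sides A hA hAu
    have := h3 A hA hAu
    have := h3' A hA hAu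
    have := h4 A hA hAu
    unfold cutThreshold; split_ifs <;> omega
  · intro h
    refine ⟨⟨fun A hA hAu => ?_, fun A hA hAu hc => ?_⟩, fun A hA hAu hc => ?_⟩
    all_goals
      have := sides A hA hAu
      have := h A hA hAu
      unfold cutThreshold at this
      split_ifs at this <;> omega

lemma weakly5EC_of_forall_mem (u : G.V)
    (h : ∀ A : Finset G.V, u ∈ A → A ≠ univ → cutThreshold A ≤ #(G.cut A)) : G.Weakly5EC := by
  refine weakly5EC_iff.2 fun A hA hAu => ?_
  by_cases hu : u ∈ A
  · exact h A hu hAu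
  · obtain ⟨z, hz⟩ := hA
    have := h Aᶜ (mem_compl.2 hu) (fun h' => (mem_compl.1 (h' ▸ mem_univ z)) hz)
    rwa [cutThreshold_compl, cut_compl] at this

namespace Walk

def append {u v w : G.V} : G.Walk u v → G.Walk v w → G.Walk u w
  | .nil _, q => q
  | .cons e h p, q => .cons e h (p.append q)

@[simp] lemma edges_append {u v w : G.V} (p : G.Walk u v) (q : G.Walk v w) :
    (p.append q).edges = p.edges ++ q.edges := by
  induction p with
  | nil => rfl
  | cons e h p ih => simp [append, edges, ih]

lemma exists_suffix {a c b : G.V} (p : G.Walk c b) (ha : a ∈ p.support) :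
    ∃ q : G.Walk a b, q.edges ⊆ p.edges ∧ q.support.Sublist p.support := by
  induction p with
  | nil w =>
    obtain rfl : a = w := by simpa [support] using ha
    exact ⟨.nil a, List.Subset.refl _, List.Sublist.refl _⟩
  | cons e h p ih =>
    rcases List.mem_cons.1 ha with rfl | ha
    · exact ⟨.cons e h p, List.Subset.refl _, List.Sublist.refl _⟩
    · obtain ⟨q, hqe, hqs⟩ := ih ha
      exact ⟨q, List.Subset.trans hqe (List.subset_cons_self _ _),
        hqs.trans (List.sublist_cons_self _ _)⟩

lemma exists_isPath {a b : G.V} (w : G.Walk a b) :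
    ∃ p : G.Walk a b, p.IsPath ∧ p.edges ⊆ w.edges := by
  induction w with
  | nil v => exact ⟨.nil v, List.nodup_singleton v, List.Subset.refl _⟩
  | @cons u _ _ e h w ih =>
    obtain ⟨p, hp, hpw⟩ := ih
    by_cases hu : u ∈ p.support
    · obtain ⟨q, hqe, hqs⟩ := p.exists_suffix hu
      exact ⟨q, hqs.nodup hp,
        List.Subset.trans hqe (List.Subset.trans hpw (List.subset_cons_self _ _))⟩
    · exact ⟨.cons e h p, List.nodup_cons.2 ⟨hu, hp⟩, List.cons_subset_cons _ hpw⟩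

end Walk

section EdgeWalks

variable {G' : Multigraph} (f : G'.V → G.V) (img : G'.E → Finset G.E)

lemma Walk.exists_lift
    (walkOf : ∀ e a b, G'.ends e = s(a, b) → ∃ w : G.Walk (f a) (f b), ∀ g ∈ w.edges, g ∈ img e)
    {a b : G'.V} (p : G'.Walk a b) :
    ∃ w : G.Walk (f a) (f b), ∀ g ∈ w.edges, ∃ e ∈ p.edges, g ∈ img e := by
  induction p with
  | nil v => exact ⟨.nil (f v), by simp [Walk.edges]⟩
  | cons e h p ih =>
    obtain ⟨w₁, hw₁⟩ := walkOf _ _ _ h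
    obtain ⟨w₂, hw₂⟩ := ih
    refine ⟨w₁.append w₂, fun g hg => ?_⟩
    rcases List.mem_append.1 (Walk.edges_append w₁ w₂ ▸ hg) with hg | hg
    · exact ⟨e, List.mem_cons_self, hw₁ g hg⟩
    · obtain ⟨e', he', hge'⟩ := hw₂ g hg
      exact ⟨e', List.mem_cons_of_mem _ he', hge'⟩

lemma Immerses.of_edgeWalks {H : Multigraph} (hf : Function.Injective f)
    (walkOf : ∀ e a b, G'.ends e = s(a, b) → ∃ w : G.Walk (f a) (f b), ∀ g ∈ w.edges, g ∈ img e)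
    (himg : ∀ e e', e ≠ e' → Disjoint (img e) (img e')) (h : Immerses H G') : Immerses H G := by
  obtain ⟨D⟩ := h
  have lift : ∀ k, ∃ w : G.Walk (f (D.pstart k)) (f (D.pend k)), w.IsPath ∧
      ∀ g ∈ w.edges, ∃ e ∈ (D.walk k).edges, g ∈ img e := fun k => by
    obtain ⟨w, hw⟩ := Walk.exists_lift f img walkOf (D.walk k)
    obtain ⟨p, hp, hpw⟩ := w.exists_isPath
    exact ⟨p, hp, fun g hg => hw g (hpw hg)⟩
  choose w hpath hw using lift
  refine ⟨⟨f ∘ D.vmap, hf.comp D.inj, f ∘ D.pstart, f ∘ D.pend, w, fun k => ?_, hpath,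
    fun k k' hkk' => ?_⟩⟩
  · rw [← Sym2.map_map, ← D.ends_eq k, Sym2.map_mk]; rfl
  · intro g hgk hgk'
    obtain ⟨e, he, hge⟩ := hw k g hgk
    obtain ⟨e', he', hge'⟩ := hw k' g hgk'
    by_cases hee' : e = e'
    · exact D.edgeDisj k k' hkk' he (hee' ▸ he')
    · exact disjoint_left.1 (himg e e' hee') hge hge'

end EdgeWalks

@[reducible] def deleteEdge (G : Multigraph) (e₀ : G.E) : Multigraph where
  V := G.V
  E := {e : G.E // e ≠ e₀}
  ends e := G.ends e
  noLoop e := G.noLoop e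

@[reducible] def reroute (G : Multigraph) (e₀ : G.E) (z : Sym2 G.V) (hz : ¬ z.IsDiag) :
    Multigraph where
  V := G.V
  E := G.E
  ends e := if e = e₀ then z else G.ends e
  noLoop e := by
    split_ifs
    exacts [hz, G.noLoop e]

section deleteEdge

variable (e₀ : G.E)

lemma card_deleteEdge_E : Fintype.card (G.deleteEdge e₀).E + 1 = Fintype.card G.E := by
  change Fintype.card {e // e ≠ e₀} + 1 = _
  rw [Fintype.card_subtype_compl, Fintype.card_subtype_eq]
  have : 0 < Fintype.card G.E := Fintype.card_pos_iff.2 ⟨e₀⟩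
  omega

lemma card_deleteEdge_cut (A : Finset G.V) :
    #((G.deleteEdge e₀).cut A) + (if e₀ ∈ G.cut A then 1 else 0) = #(G.cut A) := by
  have : (G.deleteEdge e₀).cut A = (G.cut A).subtype (· ≠ e₀) := by
    ext e
    simp [cut]
  rw [this, card_subtype, filter_ne', card_erase_add_ite]

lemma deleteEdge_mult (u v : G.V) :
    (G.deleteEdge e₀).mult u v + (if G.ends e₀ = s(u, v) then 1 else 0) = G.mult u v := by
  have : (G.deleteEdge e₀).edgesBetween u v = (G.edgesBetween u v).subtype (· ≠ e₀) := by
    ext e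
    simp [edgesBetween]
  have h := card_erase_add_ite (G.edgesBetween u v) e₀
  simp only [mem_edgesBetween] at h
  rwa [← card_edgesBetween, this, card_subtype, filter_ne']

lemma not_immerses_deleteEdge {H : Multigraph} (h : ¬ Immerses H G) :
    ¬ Immerses H (G.deleteEdge e₀) := by
  refine fun hH => h (hH.of_edgeWalks (G' := G.deleteEdge e₀) (G := G) id (fun e => {e.val})
    Function.injective_id (fun e a b hab => ⟨.cons e.val hab (@Walk.nil G b), ?_⟩) ?_)
  · simp [Walk.edges]
  · intro e e' hee'
    simpa [Subtype.ext_iff] using hee'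

end deleteEdge

section reroute

variable (e₀ : G.E) (z : Sym2 G.V) (hz : ¬ z.IsDiag)

lemma reroute_ends_self : (G.reroute e₀ z hz).ends e₀ = z := if_pos rfl

lemma reroute_ends_of_ne {e : G.E} (he : e ≠ e₀) : (G.reroute e₀ z hz).ends e = G.ends e :=
  if_neg he

lemma card_reroute_cut (A : Finset G.V) :
    #((G.reroute e₀ z hz).cut A) + (if e₀ ∈ G.cut A then 1 else 0)
      = #(G.cut A) + (if e₀ ∈ (G.reroute e₀ z hz).cut A then 1 else 0) := by
  refine card_add_ite_eq_of_erase_eq ?_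
  ext e
  by_cases he : e = e₀
  · simp [he]
  · simp only [mem_erase, he, ne_eq, not_false_eq_true, true_and]
    simp only [cut, mem_filter, mem_univ, true_and, if_neg he]

lemma reroute_mult (u v : G.V) :
    (G.reroute e₀ z hz).mult u v + (if G.ends e₀ = s(u, v) then 1 else 0)
      = G.mult u v + (if z = s(u, v) then 1 else 0) := by
  have h := card_add_ite_eq_of_erase_eq (a := e₀) (s := (G.reroute e₀ z hz).edgesBetween u v)
    (t := G.edgesBetween u v) ?_
  · simpa only [mem_edgesBetween, card_edgesBetween, ↓reduceIte] using h
  ext e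
  by_cases he : e = e₀
  · simp [he]
  · simp only [mem_erase, he, ne_eq, not_false_eq_true, true_and, mem_edgesBetween, ↓reduceIte]

end reroute

/-- With `e₀ = uv` and `e₁ = xu`, the path `x u v` is replaced by an edge `xv`, carried by `e₀`. -/
@[reducible] def splitOff (G : Multigraph) (e₀ e₁ : G.E) {x v : G.V} (hxv : x ≠ v) : Multigraph :=
  (G.reroute e₀ s(x, v) (Sym2.mk_isDiag_iff.not.2 hxv)).deleteEdge e₁

section splitOff

variable {u v x : G.V} {e₀ e₁ : G.E}

lemma card_splitOff_E (hxv : x ≠ v) :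
    Fintype.card (G.splitOff e₀ e₁ hxv).E + 1 = Fintype.card G.E :=
  card_deleteEdge_E (G := G.reroute e₀ s(x, v) _) e₁

lemma ne_of_splitOff (h₀ : G.ends e₀ = s(u, v)) (h₁ : G.ends e₁ = s(x, u)) (hxv : x ≠ v) :
    e₁ ≠ e₀ := by
  rintro rfl
  rw [h₀, Sym2.eq_iff] at h₁
  rcases h₁ with ⟨rfl, rfl⟩ | ⟨-, rfl⟩ <;> exact hxv rfl

lemma card_splitOff_cut (h₀ : G.ends e₀ = s(u, v)) (h₁ : G.ends e₁ = s(x, u)) (hxv : x ≠ v)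
    {A : Finset G.V} (hu : u ∈ A) :
    #((G.splitOff e₀ e₁ hxv).cut A) + (if x ∉ A ∧ v ∉ A then 2 else 0) = #(G.cut A) := by
  have hz : ¬ s(x, v).IsDiag := Sym2.mk_isDiag_iff.not.2 hxv
  show #(((G.reroute e₀ s(x, v) hz).deleteEdge e₁).cut A) + _ = _
  have hdel := card_deleteEdge_cut (G := G.reroute e₀ s(x, v) hz) e₁ A
  have hre := card_reroute_cut e₀ s(x, v) hz A
  simp only [mem_cut_iff (G := G.reroute e₀ s(x, v) hz)
    (reroute_ends_of_ne _ _ hz (ne_of_splitOff h₀ h₁ hxv) ▸ h₁)] at hdel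
  simp only [mem_cut_iff h₀, mem_cut_iff (G := G.reroute e₀ s(x, v) hz)
    (reroute_ends_self _ _ _)] at hre
  by_cases hx : x ∈ A <;> by_cases hv : v ∈ A <;>
    simp only [hu, hx, hv, not_true, not_false_eq_true, iff_true, iff_false, and_true, and_false,
      ↓reduceIte] at hdel hre ⊢ <;> omega

lemma splitOff_mult (h₀ : G.ends e₀ = s(u, v)) (h₁ : G.ends e₁ = s(x, u)) (hxv : x ≠ v)
    (hxu : x ≠ u) : (G.splitOff e₀ e₁ hxv).mult u v + 1 = G.mult u v := by
  have hz : ¬ s(x, v).IsDiag := Sym2.mk_isDiag_iff.not.2 hxv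
  show ((G.reroute e₀ s(x, v) hz).deleteEdge e₁).mult u v + 1 = _
  have hdel := deleteEdge_mult (G := G.reroute e₀ s(x, v) hz) e₁ u v
  have hre := reroute_mult e₀ s(x, v) hz u v
  rw [reroute_ends_of_ne _ _ _ (ne_of_splitOff h₀ h₁ hxv), h₁] at hdel
  simp [h₀, hxu, hxv] at hdel hre
  omega

lemma not_immerses_splitOff (h₀ : G.ends e₀ = s(u, v)) (h₁ : G.ends e₁ = s(x, u)) (hxv : x ≠ v)
    {H : Multigraph} (h : ¬ Immerses H G) : ¬ Immerses H (G.splitOff e₀ e₁ hxv) := by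
  have h10 := ne_of_splitOff h₀ h₁ hxv
  refine fun hH => h (hH.of_edgeWalks (G' := G.splitOff e₀ e₁ hxv) (G := G) id
    (fun e => if e.val = e₀ then {e₀, e₁} else {e.val}) Function.injective_id ?_ ?_)
  · rintro ⟨e, he⟩ a b hab
    change (if e = e₀ then s(x, v) else G.ends e) = s(a, b) at hab
    by_cases he0 : e = e₀
    · rw [if_pos he0, Sym2.eq_iff] at hab
      rw [← he0] at h₀
      rcases hab with ⟨rfl, rfl⟩ | ⟨rfl, rfl⟩
      · exact ⟨.cons e₁ h₁ (.cons e h₀ (@Walk.nil G _)), by simp [Walk.edges, he0]⟩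
      · exact ⟨.cons e (h₀.trans Sym2.eq_swap) (.cons e₁ (h₁.trans Sym2.eq_swap) (@Walk.nil G _)),
          by simp [Walk.edges, he0]⟩
    · rw [if_neg he0] at hab
      exact ⟨.cons e hab (@Walk.nil G _), by simp [Walk.edges, he0]⟩
  · rintro ⟨e, he⟩ ⟨e', he'⟩ hee'
    simp only [ne_eq, Subtype.mk.injEq] at hee'
    by_cases h0 : e = e₀ <;> by_cases h0' : e' = e₀ <;> simp_all

end splitOff

lemma weakly5EC_deleteEdge (h5 : G.Weakly5EC) (e₀ : G.E)
    (h : ∀ A : Finset G.V, e₀ ∈ G.cut A → cutThreshold A < #(G.cut A)) :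
    (G.deleteEdge e₀).Weakly5EC := by
  refine weakly5EC_iff.2 fun A hA hAu => ?_
  have hdel := card_deleteEdge_cut e₀ A
  have h5A := weakly5EC_iff.1 h5 A hA hAu
  split_ifs at hdel with he
  · have := h A he
    omega
  · omega

lemma weakly5EC_splitOff {u v x : G.V} {e₀ e₁ : G.E} (h5 : G.Weakly5EC)
    (h₀ : G.ends e₀ = s(u, v)) (h₁ : G.ends e₁ = s(x, u)) (hxv : x ≠ v)
    (h : ∀ A : Finset G.V, u ∈ A → x ∉ A → v ∉ A → 7 ≤ #(G.cut A)) :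
    (G.splitOff e₀ e₁ hxv).Weakly5EC := by
  refine weakly5EC_of_forall_mem u fun A hu hAu => ?_
  have hsplit := card_splitOff_cut h₀ h₁ hxv hu
  have h5A := weakly5EC_iff.1 h5 A ⟨u, hu⟩ hAu
  split_ifs at hsplit with hxvA
  · have := h A hu hxvA.1 hxvA.2
    have := cutThreshold_le_five A
    omega
  · omega

lemma IsRegular.mult_lt {d : ℕ} (hreg : G.IsRegular d) (hconn : G.EdgeConnGe 1)
    (hV : 3 ≤ Fintype.card G.V) {u v : G.V} (huv : u ≠ v) : G.mult u v < d := by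
  by_contra! hd
  have hsat : ∀ w ∈ ({u, v} : Finset G.V), G.cut {w} = G.edgesBetween u v := fun w hw => by
    refine (eq_of_subset_of_card_le (fun e he => ?_) ?_).symm
    · rw [mem_cut_singleton, mem_edgesBetween.1 he]
      rcases mem_insert.1 hw with rfl | hw
      · exact Sym2.mem_mk_left _ _
      · exact mem_singleton.1 hw ▸ Sym2.mem_mk_right _ _
    · rw [card_cut_singleton, hreg w, card_edgesBetween]
      exact hd
  have hempty : G.cut {u, v} = ∅ := by
    refine eq_empty_of_forall_notMem fun e he => ?_
    obtain ⟨a, b, hab⟩ := exists_ends_eq e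
    have hcross := (mem_cut_iff hab).1 he
    have hw : ∃ w ∈ ({u, v} : Finset G.V), w ∈ G.ends e := by
      by_cases ha : a ∈ ({u, v} : Finset G.V)
      · exact ⟨a, ha, hab ▸ Sym2.mem_mk_left _ _⟩
      · exact ⟨b, not_not.1 (mt hcross.2 ha), hab ▸ Sym2.mem_mk_right _ _⟩
    obtain ⟨w, hw, hwe⟩ := hw
    rw [← mem_cut_singleton, hsat w hw, mem_edgesBetween] at hwe
    rw [mem_cut_iff hwe] at he
    simp at he
  have hcard : #({u, v} : Finset G.V) < Fintype.card G.V := by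
    rw [card_pair huv]
    omega
  have := hconn {u, v} (insert_nonempty _ _) (fun h => by simp [h] at hcard)
  simp [hempty] at this

section TightCut

variable {u v : G.V} {A : Finset G.V}

lemma card_cut_sdiff_edgesBetween_add_four_le (huA : u ∈ A) (hvA : v ∉ A)
    (hA : #(G.cut A) ≤ cutThreshold A) (hm : 4 ≤ G.mult u v) :
    #(G.cut A \ G.edgesBetween u v) + 4 ≤ cutThreshold A := by
  have hsub : G.edgesBetween u v ⊆ G.cut A := fun e he => by
    rw [mem_cut_iff (mem_edgesBetween.1 he)]
    tauto
  have := card_sdiff_add_card_eq_card hsub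
  rw [card_edgesBetween] at this
  omega

lemma mem_of_mem_erase_of_notMem_cut_sdiff (hvA : v ∉ A) {e : G.E} {a b : G.V}
    (hab : G.ends e = s(a, b)) (ha : a ∈ A.erase u) (he : e ∉ G.cut A \ G.edgesBetween u v) :
    b ∈ A := by
  by_contra hb
  have hcut : e ∈ G.cut A := (mem_cut_iff hab).2 (iff_of_true (mem_of_mem_erase ha) hb)
  have huv : s(a, b) = s(u, v) :=
    hab ▸ mem_edgesBetween.1 (not_not.1 fun h => he (mem_sdiff.2 ⟨hcut, h⟩))
  rw [Sym2.eq_iff] at huv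
  rcases huv with ⟨rfl, -⟩ | ⟨rfl, -⟩
  · exact notMem_erase a A ha
  · exact hvA (mem_of_mem_erase ha)

lemma exists_ends_eq_of_mem_cut_erase_sdiff (hvA : v ∉ A) {e : G.E}
    (he : e ∈ G.cut (A.erase u) \ (G.cut A \ G.edgesBetween u v)) :
    ∃ a ∈ A.erase u, G.ends e = s(a, u) := by
  obtain ⟨he, heX⟩ := mem_sdiff.1 he
  obtain ⟨a, ha, b, hb, hab⟩ := exists_of_mem_cut he
  have hbA := mem_of_mem_erase_of_notMem_cut_sdiff hvA hab ha heX
  obtain rfl : b = u := by_contra fun hbu => hb (mem_erase.2 ⟨hbu, hbA⟩)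
  exact ⟨a, ha, hab⟩

lemma card_edgesBetween_add_card_cut_sdiff_le (hvA : v ∉ A) {A' : Finset G.V} (huA' : u ∈ A')
    (hvA' : v ∉ A') :
    #(G.edgesBetween u v) + #(G.cut (A.erase u \ A') \ (G.cut A \ G.edgesBetween u v))
      ≤ #(G.cut A') := by
  rw [← card_union_of_disjoint]
  · refine card_le_card (union_subset (fun e he => ?_) fun e he => ?_)
    · rw [mem_cut_iff (mem_edgesBetween.1 he)]
      tauto
    · obtain ⟨heD, heX⟩ := mem_sdiff.1 he
      obtain ⟨a, ha, b, hb, hab⟩ := exists_of_mem_cut heD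
      obtain ⟨haS, haA'⟩ := mem_sdiff.1 ha
      have hbA := mem_of_mem_erase_of_notMem_cut_sdiff hvA hab haS heX
      have hbA' : b ∈ A' := by
        by_cases hbu : b = u
        · exact hbu ▸ huA'
        · by_contra hbA'
          exact hb (mem_sdiff.2 ⟨mem_erase.2 ⟨hbu, hbA⟩, hbA'⟩)
      rw [mem_cut_iff hab]
      tauto
  · refine disjoint_left.2 fun e he he' => ?_
    have hcross := (mem_cut_iff (mem_edgesBetween.1 he)).1 (mem_sdiff.1 he').1
    simp only [mem_sdiff, mem_erase, ne_eq, not_true, false_and, false_iff, not_not] at hcross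
    exact hvA hcross.1.2

/-- `δ(A')` contains the `uv`-edges and `δ((A - u) \ A')` except the stray edges of `δ(A)`;
equality in the count forces `(A - u) \ A' = {x}`, a vertex of degree three on a stray edge. -/
lemma seven_le_card_cut (h5 : G.Weakly5EC) (huA : u ∈ A) (hvA : v ∉ A)
    (hA : #(G.cut A) ≤ cutThreshold A) (hm : 4 ≤ G.mult u v) {x : G.V} (hx : x ∈ A.erase u)
    (hxX : #(G.cut {x}) = 3 → ∀ f ∈ G.cut A \ G.edgesBetween u v, x ∉ G.ends f)
    {A' : Finset G.V} (huA' : u ∈ A') (hxA' : x ∉ A') (hvA' : v ∉ A') : 7 ≤ #(G.cut A') := by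
  by_contra! h6
  have hX := card_cut_sdiff_edgesBetween_add_four_le huA hvA hA hm
  have hcore := card_edgesBetween_add_card_cut_sdiff_le hvA huA' hvA'
  set X := G.cut A \ G.edgesBetween u v
  set D := A.erase u \ A'
  have huD : u ∉ D := fun h => notMem_erase u A (mem_sdiff.1 h).1
  have hvD : v ∉ D := fun h => hvA (mem_of_mem_erase (mem_sdiff.1 h).1)
  have hD3 := h5.1.1 D ⟨x, mem_sdiff.2 ⟨hx, hxA'⟩⟩ fun h => huD (h ▸ mem_univ u)
  have hDX := card_le_card_sdiff_add_card (s := G.cut D) (t := X)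
  have := cutThreshold_le_five A
  rw [card_edgesBetween] at hcore
  have hD : D = {x} :=
    h5.1.eq_singleton (mem_sdiff.2 ⟨hx, hxA'⟩) huD hvD (fun h => hvA (h ▸ huA)) (by omega)
  have hdisj : G.cut D \ X = G.cut D := sdiff_eq_self_of_disjoint <| disjoint_left.2 fun f hf hfX =>
    hxX (by rw [← hD]; omega) f hfX (mem_cut_singleton.1 (hD ▸ hf))
  rw [hdisj] at hcore
  omega

lemma nonempty_cut_erase_sdiff (h5 : G.Weakly5EC) (huA : u ∈ A) (hvA : v ∉ A)
    (hA : #(G.cut A) ≤ cutThreshold A) (hm : 4 ≤ G.mult u v) :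
    (G.cut (A.erase u) \ (G.cut A \ G.edgesBetween u v)).Nonempty := by
  have hX := card_cut_sdiff_edgesBetween_add_four_le huA hvA hA hm
  have := cutThreshold_le_five A
  obtain ⟨y, hy⟩ : (A.erase u).Nonempty := card_pos.1 <| by
    have := card_erase_add_one huA
    by_contra! hS
    have := cutThreshold_le_three (A := A) (by omega)
    omega
  have hS3 := h5.1.1 (A.erase u) ⟨y, hy⟩ fun h => notMem_erase u A (h ▸ mem_univ u)
  have := card_le_card_sdiff_add_card (s := G.cut (A.erase u)) (t := G.cut A \ G.edgesBetween u v)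
  exact card_pos.1 (by omega)

/-- A stray edge of `δ(A)` has one end in `A`. If every neighbour of `u` in `A - u` had degree
three and lay on a stray edge, they would all be that end `x`, so every edge of `δ(A - u)` meets
`x`; as `x` has degree three this forces `A = {u, x}`, too small for a tight cut with a stray
edge. -/
lemma exists_splittable_neighbor (h5 : G.Weakly5EC) (huA : u ∈ A) (hvA : v ∉ A)
    (hA : #(G.cut A) ≤ cutThreshold A) (hm : 4 ≤ G.mult u v) :
    ∃ x ∈ A.erase u, ∃ e₁, G.ends e₁ = s(x, u) ∧
      (#(G.cut {x}) = 3 → ∀ f ∈ G.cut A \ G.edgesBetween u v, x ∉ G.ends f) := by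
  by_contra! hbad
  have hX := card_cut_sdiff_edgesBetween_add_four_le huA hvA hA hm
  have := cutThreshold_le_five A
  obtain ⟨e, he⟩ := nonempty_cut_erase_sdiff h5 huA hvA hA hm
  set S := A.erase u
  set X := G.cut A \ G.edgesBetween u v
  have huS : u ∉ S := notMem_erase u A
  obtain ⟨x, hxS, hex⟩ := exists_ends_eq_of_mem_cut_erase_sdiff hvA he
  obtain ⟨hx3, f, hfX, hxf⟩ := hbad x hxS e hex
  have hfX' : ∀ f' ∈ X, f' = f := fun f' hf' => card_le_one.1 (by omega) f' hf' f hfX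
  have hall : ∀ e ∈ G.cut S, x ∈ G.ends e := by
    intro e he
    by_cases heX : e ∈ X
    · exact hfX' e heX ▸ hxf
    · obtain ⟨a, haS, hea⟩ := exists_ends_eq_of_mem_cut_erase_sdiff hvA (mem_sdiff.2 ⟨he, heX⟩)
      obtain ⟨-, f', hf'X, haf'⟩ := hbad a haS e hea
      have hax : a = x := eq_of_mem_ends_of_mem_cut (mem_sdiff.1 hfX).1
        (mem_of_mem_erase haS) (mem_of_mem_erase hxS) (hfX' f' hf'X ▸ haf') hxf
      exact hea ▸ hax ▸ Sym2.mem_mk_left a u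
  have hS : #(G.cut (S.erase x)) + #(G.cut S) ≤ #(G.cut {x}) :=
    card_cut_erase_add_card_cut_le hxS hall
  have hS3 := h5.1.1 S ⟨x, hxS⟩ (fun h => huS (h ▸ mem_univ u))
  have hSx : S.erase x = ∅ :=
    h5.1.1.eq_empty_of_cut_eq_empty (by norm_num) (fun h => huS (mem_of_mem_erase h))
      (card_eq_zero.1 (by omega))
  have hA2 : #A ≤ 2 := by
    have h1 := card_erase_add_one huA
    have h2 := card_erase_add_one hxS
    rw [hSx, card_empty] at h2
    omega
  have := cutThreshold_le_four hA2
  have := card_pos.2 ⟨f, hfX⟩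
  omega

end TightCut

def IsSmallerCompetitor (H G G' : Multigraph) : Prop :=
  Fintype.card G'.V = Fintype.card G.V ∧ G'.Weakly5EC ∧ ¬ Immerses H G' ∧ ¬ G'.IsRegular 3 ∧
    Fintype.card G'.E < Fintype.card G.E

lemma exists_ends_eq_of_mult_pos {u v : G.V} (h : 0 < G.mult u v) : ∃ e, G.ends e = s(u, v) := by
  obtain ⟨e, he⟩ := card_pos.1 (h.trans_eq (card_edgesBetween u v).symm)
  exact ⟨e, mem_edgesBetween.1 he⟩

section Reduction

variable {H : Multigraph} {u v : G.V}

lemma isSmallerCompetitor_deleteEdge (h5 : G.Weakly5EC) (hno : ¬ Immerses H G)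
    (hV : 3 ≤ Fintype.card G.V) (hm : 4 ≤ G.mult u v) {e₀ : G.E} (he₀ : G.ends e₀ = s(u, v))
    (hloose : ∀ A : Finset G.V, e₀ ∈ G.cut A → cutThreshold A < #(G.cut A)) :
    IsSmallerCompetitor H G (G.deleteEdge e₀) := by
  have h5' := weakly5EC_deleteEdge h5 e₀ hloose
  have huv : u ≠ v := by
    rintro rfl
    rw [mult_self] at hm
    omega
  have hmult := deleteEdge_mult e₀ u v
  have hE := card_deleteEdge_E e₀
  rw [if_pos he₀] at hmult
  refine ⟨rfl, h5', not_immerses_deleteEdge e₀ hno, fun hreg => ?_, by omega⟩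
  have := hreg.mult_lt (h5'.1.1.mono (by norm_num)) hV huv
  omega

lemma exists_isSmallerCompetitor_splitOff (h5 : G.Weakly5EC) (hno : ¬ Immerses H G)
    (hV : 3 ≤ Fintype.card G.V) (hm : 4 ≤ G.mult u v) {A : Finset G.V} (huA : u ∈ A)
    (hvA : v ∉ A) (hA : #(G.cut A) ≤ cutThreshold A) : ∃ G', IsSmallerCompetitor H G G' := by
  obtain ⟨x, hxS, e₁, he₁, hx⟩ := exists_splittable_neighbor h5 huA hvA hA hm
  obtain ⟨e₀, he₀⟩ := exists_ends_eq_of_mult_pos (u := u) (v := v) (by omega)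
  have hxu : x ≠ u := ne_of_mem_erase hxS
  have hxv : x ≠ v := fun h => hvA (h ▸ mem_of_mem_erase hxS)
  have h5' := weakly5EC_splitOff h5 he₀ he₁ hxv fun A' huA' hxA' hvA' =>
    seven_le_card_cut h5 huA hvA hA hm hxS hx huA' hxA' hvA'
  have hmult := splitOff_mult he₀ he₁ hxv hxu
  have hE := card_splitOff_E (e₀ := e₀) (e₁ := e₁) hxv
  refine ⟨G.splitOff e₀ e₁ hxv, rfl, h5', not_immerses_splitOff he₀ he₁ hxv hno,
    fun hreg => ?_, by omega⟩
  have huv : u ≠ v := fun h => hvA (h ▸ huA)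
  have := hreg.mult_lt (h5'.1.1.mono (by norm_num)) hV huv
  omega

lemma exists_isSmallerCompetitor (h5 : G.Weakly5EC) (hno : ¬ Immerses H G)
    (hV : 3 ≤ Fintype.card G.V) (hm : 4 ≤ G.mult u v) : ∃ G', IsSmallerCompetitor H G G' := by
  obtain ⟨e₀, he₀⟩ := exists_ends_eq_of_mult_pos (u := u) (v := v) (by omega)
  by_cases htight : ∃ A : Finset G.V, e₀ ∈ G.cut A ∧ #(G.cut A) ≤ cutThreshold A
  · obtain ⟨A, he₀A, hA⟩ := htight
    rw [mem_cut_iff he₀] at he₀A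
    by_cases huA : u ∈ A
    · exact exists_isSmallerCompetitor_splitOff h5 hno hV hm huA (he₀A.1 huA) hA
    · exact exists_isSmallerCompetitor_splitOff h5 hno hV (mult_comm u v ▸ hm)
        (not_not.1 (mt he₀A.2 huA)) huA hA
  · exact ⟨_, isSmallerCompetitor_deleteEdge h5 hno hV hm he₀
      fun A hA => not_le.1 fun h => htight ⟨A, hA, h⟩⟩

end Reduction

end Multigraph

open Multigraph in
theorem minimal_C5_multiplicity_le_three_general (G : Multigraph)
    (h5 : G.Weakly5EC) (hno : ¬ Immerses K33 G)
    (hmin : ∀ G' : Multigraph, Fintype.card G'.V = Fintype.card G.V →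
      G'.Weakly5EC → ¬ Immerses K33 G' → ¬ (G'.IsRegular 3 ∧ G'.Planar) →
      Fintype.card G.E ≤ Fintype.card G'.E)
    (hn : 6 ≤ Fintype.card G.V) :
    ∀ u v : G.V, G.mult u v ≤ 3 := by
  intro u v
  by_contra! hm
  obtain ⟨G', hV, h5', hno', hreg', hE⟩ := exists_isSmallerCompetitor h5 hno (by omega) hm
  exact (hmin G' hV h5' hno' fun h => hreg' h.1).not_gt hE

open Multigraph in
/-- Let `G` be a weakly 5-edge-connected graph with at least 6 vertices and no
`K_{3,3}` immersion, not 3-regular planar, minimal in edge count among such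
graphs on the same number of vertices.  Then no edge of `G` has multiplicity
greater than three. -/
theorem minimal_C5_multiplicity_le_three (G : Multigraph)
    (h5 : G.Weakly5EC) (hno : ¬ Immerses K33 G)
    (hnrp : ¬ (G.IsRegular 3 ∧ G.Planar))
    (hmin : ∀ G' : Multigraph, Fintype.card G'.V = Fintype.card G.V →
      G'.Weakly5EC → ¬ Immerses K33 G' → ¬ (G'.IsRegular 3 ∧ G'.Planar) →
      Fintype.card G.E ≤ Fintype.card G'.E)
    (hn : 6 ≤ Fintype.card G.V) :
    ∀ u v : G.V, G.mult u v ≤ 3 :=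
  minimal_C5_multiplicity_le_three_general G h5 hno hmin hn
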